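/- Let v : [0,∞) → [0,∞) be continuous and satisfy v(t) ≤ K e^{ρ t} a + L K_0 ∫_0^t e^{−γ(t−s)} v(s) ds for all t ≥ 0, where K, K_0, L, a > 0, γ > 0, ρ < 0, and ρ + γ ≠ L K_0, with L K_0 − γ > ρ. Then v(t) ≤ a [K e^{ρ t} + (K L K_0/(L K_0 − γ − ρ)) e^{(L K_0 − γ)t}] for all t ≥ 0. -/

import Mathlib

/-!
Multiplying the hypothesis by `exp (γ t)` turns it into the linear Gronwall inequality
`w t ≤ K a exp ((ρ + γ) t) + L K0 ∫₀ᵗ w` for `w t = exp (γ t) v t`. Since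
`exp (-L K0 t) ∫₀ᵗ w - ∫₀ᵗ exp (-L K0 s) K a exp ((ρ + γ) s) ds` is nonincreasing and vanishes at
`0`, integrating the exponential forcing term explicitly bounds `w`; dropping the resulting
nonpositive multiple of `exp ((ρ + γ) t)`, which needs `ρ + γ < L K0`, and dividing by
`exp (γ t)` gives the estimate.
-/

open Real

theorem integral_le_integral_exp_mul_of_le_add_mul_integral {w g : ℝ → ℝ} {c : ℝ}
    (hw : Continuous w) (hg : Continuous g)
    (h : ∀ u, 0 ≤ u → w u ≤ g u + c * ∫ s in (0:ℝ)..u, w s) {t : ℝ} (ht : 0 ≤ t) :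
    ∫ s in (0:ℝ)..t, w s ≤ ∫ s in (0:ℝ)..t, exp (c * (t - s)) * g s := by
  set F : ℝ → ℝ := fun u => ∫ s in (0:ℝ)..u, w s
  set G : ℝ → ℝ := fun u => ∫ s in (0:ℝ)..u, exp (-c * s) * g s
  have hF (u : ℝ) : HasDerivAt F (w u) u := hw.integral_hasStrictDerivAt 0 u |>.hasDerivAt
  have hG (u : ℝ) : HasDerivAt G (exp (-c * u) * g u) u :=
    (by fun_prop : Continuous fun s => exp (-c * s) * g s).integral_hasStrictDerivAt 0 u
      |>.hasDerivAt
  have hE (u : ℝ) : HasDerivAt (fun s => exp (-c * s)) (exp (-c * u) * -c) u := by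
    simpa using ((hasDerivAt_id u).const_mul (-c)).exp
  -- `G - exp (-c ·) * F` has derivative `exp (-c u) * (g u + c F u - w u) ≥ 0` and vanishes at `0`.
  have hmono : MonotoneOn (fun u => G u - exp (-c * u) * F u) (Set.Ici 0) := by
    refine monotoneOn_of_hasDerivWithinAt_nonneg (convex_Ici 0)
      (fun u _ => ((hG u).sub ((hE u).mul (hF u))).continuousAt.continuousWithinAt)
      (fun u _ => ((hG u).sub ((hE u).mul (hF u))).hasDerivWithinAt) fun u hu => ?_
    rw [interior_Ici] at hu
    have hgap : 0 ≤ exp (-c * u) * (g u + c * F u - w u) :=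
      mul_nonneg (exp_nonneg _) (by linarith [h u hu.le])
    linarith
  have hGF : exp (-c * t) * F t ≤ G t := by
    simpa [F, G] using hmono Set.self_mem_Ici (Set.mem_Ici.mpr ht) ht
  calc F t = exp (c * t) * (exp (-c * t) * F t) := by
        rw [← mul_assoc, ← exp_add]; ring_nf; simp
    _ ≤ exp (c * t) * G t := by gcongr
    _ = ∫ s in (0:ℝ)..t, exp (c * (t - s)) * g s := by
        rw [← intervalIntegral.integral_const_mul]
        congr 1 with s
        rw [← mul_assoc, ← exp_add]; ring_nf

theorem integral_exp_mul_sub_mul_exp {b c : ℝ} (hbc : b ≠ c) (t : ℝ) :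
    ∫ s in (0:ℝ)..t, exp (c * (t - s)) * exp (b * s) = (exp (c * t) - exp (b * t)) / (c - b) := by
  have hcb : b - c ≠ 0 := sub_ne_zero.mpr hbc
  calc ∫ s in (0:ℝ)..t, exp (c * (t - s)) * exp (b * s)
      = exp (c * t) * ∫ s in (0:ℝ)..t, exp ((b - c) * s) := by
        rw [← intervalIntegral.integral_const_mul]
        congr 1 with s
        rw [← exp_add, ← exp_add]; ring_nf
    _ = (exp (c * t) - exp (b * t)) / (c - b) := by
        have hexp : exp (c * t) * exp ((b - c) * t) = exp (b * t) := by rw [← exp_add]; ring_nf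
        rw [intervalIntegral.integral_comp_mul_left (fun x => exp x) hcb, integral_exp,
          smul_eq_mul, mul_zero, exp_zero, mul_left_comm, mul_sub, hexp, mul_one, ← neg_sub c b, inv_neg, div_eq_inv_mul]
        ring

theorem le_add_exp_of_le_exp_add_mul_integral {w : ℝ → ℝ} {A b c : ℝ} (hw : Continuous w)
    (hA : 0 ≤ A) (hc : 0 ≤ c) (hbc : b < c)
    (h : ∀ u, 0 ≤ u → w u ≤ A * exp (b * u) + c * ∫ s in (0:ℝ)..u, w s) {t : ℝ} (ht : 0 ≤ t) :
    w t ≤ A * exp (b * t) + c * A / (c - b) * exp (c * t) := by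
  have hcb : 0 < c - b := sub_pos.mpr hbc
  have hint : ∫ s in (0:ℝ)..t, w s ≤ A * ((exp (c * t) - exp (b * t)) / (c - b)) := by
    simpa only [mul_left_comm _ A, intervalIntegral.integral_const_mul,
      integral_exp_mul_sub_mul_exp hbc.ne] using
      integral_le_integral_exp_mul_of_le_add_mul_integral hw (by fun_prop) h ht
  calc w t ≤ A * exp (b * t) + c * ∫ s in (0:ℝ)..t, w s := h t ht
    _ ≤ A * exp (b * t) + c * (A * ((exp (c * t) - exp (b * t)) / (c - b))) := by gcongr
    _ ≤ A * exp (b * t) + c * A / (c - b) * exp (c * t) := by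
        have hdrop : 0 ≤ c * A / (c - b) * exp (b * t) := by positivity
        linarith [show c * (A * ((exp (c * t) - exp (b * t)) / (c - b))) =
          c * A / (c - b) * exp (c * t) - c * A / (c - b) * exp (b * t) by ring]

theorem exp_mul_integral_exp_neg_mul_sub_mul (v : ℝ → ℝ) (γ t : ℝ) :
    exp (γ * t) * ∫ s in (0:ℝ)..t, exp (-γ * (t - s)) * v s =
      ∫ s in (0:ℝ)..t, exp (γ * s) * v s := by
  rw [← intervalIntegral.integral_const_mul]
  congr 1 with s
  rw [← mul_assoc, ← exp_add]
  ring_nf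

theorem gronwall_stable_projection_estimate_general
    (v : ℝ → ℝ) (hv_cont : Continuous v)
    (K K0 L a γ ρ : ℝ)
    (hK : 0 < K) (hK0 : 0 < K0) (hL : 0 < L) (ha : 0 < a)
    (hgap : ρ < L * K0 - γ)
    (hineq : ∀ t : ℝ, 0 ≤ t →
      v t ≤ K * exp (ρ * t) * a + L * K0 * ∫ s in (0:ℝ)..t, exp (-γ * (t - s)) * v s) :
    ∀ t : ℝ, 0 ≤ t →
      v t ≤ a * (K * exp (ρ * t) + (K * L * K0 / (L * K0 - γ - ρ)) * exp ((L * K0 - γ) * t)) := by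
  intro t ht
  have hw : ∀ u, 0 ≤ u → exp (γ * u) * v u ≤
      K * a * exp ((ρ + γ) * u) + L * K0 * ∫ s in (0:ℝ)..u, exp (γ * s) * v s := by
    intro u hu
    calc exp (γ * u) * v u
        ≤ exp (γ * u) * (K * exp (ρ * u) * a +
            L * K0 * ∫ s in (0:ℝ)..u, exp (-γ * (u - s)) * v s) := by gcongr; exact hineq u hu
      _ = _ := by
        rw [mul_add, mul_left_comm _ (L * K0), exp_mul_integral_exp_neg_mul_sub_mul, add_mul,
          exp_add]
        ring
  have hwt := le_add_exp_of_le_exp_add_mul_integral (by fun_prop) (by positivity)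
    (by positivity) (by linarith) hw ht
  have hrhs : K * a * exp ((ρ + γ) * t) + L * K0 * (K * a) / (L * K0 - (ρ + γ)) * exp (L * K0 * t)
      = exp (γ * t) *
        (a * (K * exp (ρ * t) + (K * L * K0 / (L * K0 - γ - ρ)) * exp ((L * K0 - γ) * t))) := by
    rw [add_mul ρ, exp_add, show L * K0 * t = (L * K0 - γ) * t + γ * t by ring, exp_add,
      show L * K0 - (ρ + γ) = L * K0 - γ - ρ by ring]
    ring
  exact le_of_mul_le_mul_left (hrhs ▸ hwt) (exp_pos _)

/-- Gronwall-type estimate for the stable projection of the difference of two solutions. -/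
theorem gronwall_stable_projection_estimate
    (v : ℝ → ℝ) (hv_cont : Continuous v) (hv_nonneg : ∀ t, 0 ≤ t → 0 ≤ v t)
    (K K0 L a γ ρ : ℝ)
    (hK : 0 < K) (hK0 : 0 < K0) (hL : 0 < L) (ha : 0 < a) (hγ : 0 < γ) (hρ : ρ < 0)
    (hne : ρ + γ ≠ L * K0) (hgap : ρ < L * K0 - γ)
    (hineq : ∀ t : ℝ, 0 ≤ t →
      v t ≤ K * exp (ρ * t) * a + L * K0 * ∫ s in (0:ℝ)..t, exp (-γ * (t - s)) * v s) :
    ∀ t : ℝ, 0 ≤ t →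
      v t ≤ a * (K * exp (ρ * t) + (K * L * K0 / (L * K0 - γ - ρ)) * exp ((L * K0 - γ) * t)) :=
  gronwall_stable_projection_estimate_general v hv_cont K K0 L a γ ρ hK hK0 hL ha hgap hineq
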